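/- Let a, b, p, q be real numbers with a > p ≥ 0 and b > q ≥ 0. Then the 2-step nilpotent Lie algebra (ℝ⁶, β_{a,b,p,q}) is isomorphic to the complex Heisenberg algebra h₃^ℂ; that is, there exists a linear automorphism φ of ℝ⁶ carrying β_{a,b,p,q} to the alternating bilinear map c with c(e₁,e₃) = e₅, c(e₄,e₂) = e₅, c(e₁,e₄) = e₆, c(e₂,e₃) = e₆, and c(eᵢ,eⱼ) = 0 for all other pairs i < j, in the sense that φ(β_{a,b,p,q}(x,y)) = c(φ(x), φ(y)) for all x, y ∈ ℝ⁶. -/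

import Mathlib

/-- The 2-step nilpotent bracket `β_{a,b,p,q}` on `ℝ⁶`, with
`β(e₁,e₂) = (a+p)e₅`, `β(e₃,e₄) = (a−p)e₅`, `β(e₁,e₃) = (b+q)e₆`, `β(e₂,e₄) = −(b−q)e₆`. -/
noncomputable def betaBr (a b p q : ℝ) (x y : Fin 6 → ℝ) : Fin 6 → ℝ :=
  ((a + p) * (x 0 * y 1 - x 1 * y 0) + (a - p) * (x 2 * y 3 - x 3 * y 2)) •
    (Pi.single 4 1 : Fin 6 → ℝ) +
  ((b + q) * (x 0 * y 2 - x 2 * y 0) - (b - q) * (x 1 * y 3 - x 3 * y 1)) •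
    (Pi.single 5 1 : Fin 6 → ℝ)

/-- The bracket of the complex Heisenberg Lie algebra `h₃^ℂ = (0,0,0,0,13+42,14+23)`:
`c(e₁,e₃) = e₅ = c(e₄,e₂)`, `c(e₁,e₄) = e₆ = c(e₂,e₃)`. -/
noncomputable def cH3C (x y : Fin 6 → ℝ) : Fin 6 → ℝ :=
  (x 0 * y 2 - x 2 * y 0 + x 3 * y 1 - x 1 * y 3) • (Pi.single 4 1 : Fin 6 → ℝ) +
  (x 0 * y 3 - x 3 * y 0 + x 1 * y 2 - x 2 * y 1) • (Pi.single 5 1 : Fin 6 → ℝ)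

/-!
Write `a + p = A₁²`, `a - p = A₂²`, `b + q = B₁²`, `b - q = B₂²` with all four roots nonzero,
which is possible because `a > p ≥ 0` and `b > q ≥ 0`. Then the monomial change of
coordinates `x ↦ (A₁B₁ x₁, A₂B₂ x₄, A₁B₂ x₂, A₂B₁ x₃, B₁B₂ x₅, A₁A₂ x₆)` carries `β` to `c`:
on the `e₅`-component both sides are `B₁B₂ ((a+p) (x₁y₂ - x₂y₁) + (a-p) (x₃y₄ - x₄y₃))`,
and symmetrically on the `e₆`-component with `A₁A₂`.
-/

noncomputable def monomialEquiv {ι K : Type*} [Field K] (σ : Equiv.Perm ι) (w : ι → K)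
    (hw : ∀ i, w i ≠ 0) : (ι → K) ≃ₗ[K] (ι → K) :=
  (LinearEquiv.funCongrLeft K K σ).trans
    (LinearEquiv.piCongrRight fun i => LinearEquiv.smulOfNeZero K K (w i) (hw i))

@[simp]
theorem monomialEquiv_apply {ι K : Type*} [Field K] (σ : Equiv.Perm ι) (w : ι → K)
    (hw : ∀ i, w i ≠ 0) (x : ι → K) (i : ι) : monomialEquiv σ w hw x i = w i * x (σ i) := rfl

theorem exists_betaBr_equiv_cH3C_of_sq_eq {a b p q A₁ A₂ B₁ B₂ : ℝ}
    (hA₁ : A₁ ≠ 0) (hA₂ : A₂ ≠ 0) (hB₁ : B₁ ≠ 0) (hB₂ : B₂ ≠ 0)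
    (hap : A₁ ^ 2 = a + p) (ham : A₂ ^ 2 = a - p) (hbq : B₁ ^ 2 = b + q) (hbm : B₂ ^ 2 = b - q) :
    ∃ φ : (Fin 6 → ℝ) ≃ₗ[ℝ] (Fin 6 → ℝ),
      ∀ x y : Fin 6 → ℝ, φ (betaBr a b p q x y) = cH3C (φ x) (φ y) := by
  have hw : ∀ i, ![A₁ * B₁, A₂ * B₂, A₁ * B₂, A₂ * B₁, B₁ * B₂, A₁ * A₂] i ≠ 0 := by
    intro i
    fin_cases i <;> simp [hA₁, hA₂, hB₁, hB₂]
  refine ⟨monomialEquiv (Equiv.swap 1 2 * Equiv.swap 1 3) _ hw, fun x y => funext fun i => ?_⟩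
  fin_cases i <;>
    simp [betaBr, cH3C, Equiv.swap_apply_def, ← hap, ← ham, ← hbq, ← hbm] <;> ring

/-- for `a > p ≥ 0` and `b > q ≥ 0`, the 2-step nilpotent Lie algebra
`(ℝ⁶, β_{a,b,p,q})` is isomorphic to the complex Heisenberg algebra `h₃^ℂ`. -/
theorem beta_iso_h3C (a b p q : ℝ) (hp : 0 ≤ p) (ha : p < a) (hq : 0 ≤ q) (hb : q < b) :
    ∃ φ : (Fin 6 → ℝ) ≃ₗ[ℝ] (Fin 6 → ℝ),
      ∀ x y : Fin 6 → ℝ, φ (betaBr a b p q x y) = cH3C (φ x) (φ y) := by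
  have hap : 0 < a + p := by linarith
  have ham : 0 < a - p := by linarith
  have hbq : 0 < b + q := by linarith
  have hbm : 0 < b - q := by linarith
  exact exists_betaBr_equiv_cH3C_of_sq_eq
    (Real.sqrt_ne_zero'.2 hap) (Real.sqrt_ne_zero'.2 ham)
    (Real.sqrt_ne_zero'.2 hbq) (Real.sqrt_ne_zero'.2 hbm)
    (Real.sq_sqrt hap.le) (Real.sq_sqrt ham.le) (Real.sq_sqrt hbq.le) (Real.sq_sqrt hbm.le)
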